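/- arXiv:1005.0307 — 2 statements merged into one kernel-verified Lean document; each statement's English description precedes it below -/
import Mathlib

section
/- Every weakly initially κ-compact topological space is pseudo-(κ,κ)-compact, for every infinite cardinal κ. -/
open Cardinal Topology

universe u

/-- A topological space is weakly initially `κ`-compact if every open cover of
cardinality `≤ κ` has a finite subfamily whose union is dense. -/
def WeaklyInitiallyCompact (κ : Cardinal.{u}) (X : Type u) [TopologicalSpace X] : Prop :=
  ∀ (ι : Type u) (O : ι → Set X), #ι ≤ κ → (∀ i, IsOpen (O i)) →
    (⋃ i, O i) = Set.univ → ∃ s : Finset ι, Dense (⋃ i ∈ s, O i)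

/-- `X` is pseudo-(κ,κ)-compact: every κ-indexed sequence of nonempty open sets
has a point each of whose neighborhoods meets κ many of the sets. -/
def PseudoCompact (κ : Cardinal.{u}) (X : Type u) [TopologicalSpace X] : Prop :=
  ∀ O : κ.out → Set X, (∀ i, IsOpen (O i)) → (∀ i, (O i).Nonempty) →
    ∃ x : X, ∀ U ∈ 𝓝 x, #{i : κ.out // (U ∩ O i).Nonempty} = κ

theorem weaklyInitiallyCompact_isPseudoCompact (κ : Cardinal.{u}) (hκ : ℵ₀ ≤ κ)
    (X : Type u) [TopologicalSpace X] (hX : WeaklyInitiallyCompact κ X) :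
    PseudoCompact κ X := by
  intro O hO hOne
  -- κ.out is infinite
  have hinf : Infinite κ.out := by
    rw [Cardinal.infinite_iff, Cardinal.mk_out]
    exact hκ
  -- a bijection between κ.out and its finite subsets
  obtain ⟨e'⟩ : Nonempty (Finset κ.out ≃ κ.out) :=
    Cardinal.eq.mp (Cardinal.mk_finset_of_infinite κ.out)
  set e : κ.out ≃ Finset κ.out := e'.symm with he
  -- the "regular family" of index sets: A α = {i | α ∈ e i}
  -- closed sets C α
  set C : κ.out → Set X := fun α => closure (⋃ i ∈ {i : κ.out | α ∈ e i}, O i) with hC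
  -- there is a point in all C α
  have hmain : ∃ x : X, ∀ α, x ∈ C α := by
    by_contra h
    push_neg at h
    obtain ⟨s, hs⟩ :=
      hX κ.out (fun α => (C α)ᶜ) (Cardinal.mk_out κ).le
        (fun α => isClosed_closure.isOpen_compl)
        (by
          ext x
          simp only [Set.mem_iUnion, Set.mem_compl_iff, Set.mem_univ, iff_true]
          exact h x)
    -- the open set O (e.symm s) misses the dense union
    set i₀ := e.symm s with hi₀
    have h1 : ∀ α ∈ s, O i₀ ⊆ C α := by
      intro α hα
      refine subset_trans ?_ subset_closure
      exact Set.subset_biUnion_of_mem (by simpa [hi₀] using hα)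
    have h2 : O i₀ ∩ (⋃ α ∈ s, (C α)ᶜ) = ∅ := by
      ext y
      simp only [Set.mem_inter_iff, Set.mem_iUnion, Set.mem_compl_iff, Set.mem_empty_iff_false,
        iff_false, not_and]
      rintro hy ⟨α, hα, hyc⟩
      exact hyc (h1 α hα hy)
    have h3 := hs.inter_open_nonempty (O i₀) (hO i₀) (hOne i₀)
    rw [h2] at h3
    exact Set.not_nonempty_empty h3
  obtain ⟨x, hx⟩ := hmain
  refine ⟨x, fun U hU => ?_⟩
  -- every A α meets B = {i | (U ∩ O i).Nonempty}
  have hB : ∀ α : κ.out, ∃ i : κ.out, α ∈ e i ∧ (U ∩ O i).Nonempty := by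
    intro α
    have := (mem_closure_iff_nhds.mp (hx α)) U hU
    obtain ⟨y, hyU, hy⟩ := this
    simp only [Set.mem_iUnion, Set.mem_setOf_eq] at hy
    obtain ⟨i, hi, hyO⟩ := hy
    exact ⟨i, hi, y, hyU, hyO⟩
  choose g hg1 hg2 using hB
  -- B as a subtype
  have hcov : (Set.univ : Set κ.out) ⊆
      ⋃ i : {i : κ.out // (U ∩ O i).Nonempty}, ((e i.1 : Finset κ.out) : Set κ.out) := by
    intro α _
    exact Set.mem_iUnion.2 ⟨⟨g α, hg2 α⟩, by simpa using hg1 α⟩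
  -- the subtype is infinite
  have hBinf : Infinite {i : κ.out // (U ∩ O i).Nonempty} := by
    by_contra hfin
    rw [not_infinite_iff_finite] at hfin
    have hfin2 : (⋃ i : {i : κ.out // (U ∩ O i).Nonempty},
        ((e i.1 : Finset κ.out) : Set κ.out)).Finite :=
      Set.finite_iUnion fun i => (e i.1).finite_toSet
    have : (Set.univ : Set κ.out).Finite := hfin2.subset hcov
    exact Set.infinite_univ this
  have hBℵ : ℵ₀ ≤ #{i : κ.out // (U ∩ O i).Nonempty} := Cardinal.infinite_iff.mp hBinf
  -- cardinality computation
  refine le_antisymm ((Cardinal.mk_subtype_le _).trans (Cardinal.mk_out κ).le) ?_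
  have h4 : κ ≤ #(⋃ i : {i : κ.out // (U ∩ O i).Nonempty},
      ((e i.1 : Finset κ.out) : Set κ.out)) := by
    calc κ = #κ.out := (Cardinal.mk_out κ).symm
    _ = #(Set.univ : Set κ.out) := Cardinal.mk_univ.symm
    _ ≤ _ := Cardinal.mk_le_mk_of_subset hcov
  have h5 : #(⋃ i : {i : κ.out // (U ∩ O i).Nonempty},
      ((e i.1 : Finset κ.out) : Set κ.out)) ≤
      Cardinal.sum (fun _ : {i : κ.out // (U ∩ O i).Nonempty} => ℵ₀) := by
    refine Cardinal.mk_iUnion_le_sum_mk.trans (Cardinal.sum_le_sum _ _ fun i => ?_)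
    exact ((e i.1).finite_toSet.lt_aleph0).le
  rw [Cardinal.sum_const'] at h5
  have h6 := h4.trans h5
  rwa [Cardinal.mul_eq_max hBℵ le_rfl, max_eq_left hBℵ] at h6
end

section
/- Let X be a weakly initially κ-compact topological space, κ an infinite cardinal, and let (O_F)_{F ∈ S_ω(κ)} be a family of nonempty open sets indexed by the finite subsets of κ. For each α < κ let C_α be the closure of the union of all O_F with α ∈ F. Then ⋂_{α<κ} C_α ≠ ∅. -/
open Cardinal Topology

universe u

theorem iInter_closure_nonempty (κ : Cardinal.{u}) (hκ : ℵ₀ ≤ κ)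
    (X : Type u) [TopologicalSpace X] (hX : WeaklyInitiallyCompact κ X)
    (O : Finset κ.out → Set X) (hO : ∀ F, IsOpen (O F)) (hne : ∀ F, (O F).Nonempty) :
    (⋂ α : κ.out,
      closure (⋃ F ∈ {F : Finset κ.out | α ∈ F}, O F)).Nonempty := by
  by_contra h
  rw [Set.not_nonempty_iff_eq_empty] at h
  set C : κ.out → Set X := fun α => closure (⋃ F ∈ {F : Finset κ.out | α ∈ F}, O F) with hC
  have hcover : (⋃ α, (C α)ᶜ) = Set.univ := by
    rw [← Set.compl_iInter, h, Set.compl_empty]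
  obtain ⟨s, hs⟩ := hX κ.out (fun α => (C α)ᶜ) (by rw [Cardinal.mk_out])
    (fun α => isClosed_closure.isOpen_compl) hcover
  obtain ⟨y, hy, hy'⟩ := hs.exists_mem_open (hO s) (hne s)
  simp only [Set.mem_iUnion] at hy
  obtain ⟨α, hαs, hyC⟩ := hy
  exact hyC (subset_closure (Set.mem_biUnion hαs hy'))
end
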